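/- For each n ≥ 1 and each transitive frame F = ⟨W,R⟩ with w ∈ W: F, w ⊨ Wid_n^+ (i.e., the formula Wid_n^+ is valid at w under all valuations) iff for every u with w R u but not u R w, the subframe of F generated by u has width at most n (every antichain in it has at most n elements). -/

import Mathlib

/-- A Kripke frame: a set of worlds with a binary relation. -/
structure Frame where
  World : Type
  rel : World → World → Prop

/-- `f` is a reduction (surjective p-morphism) of `F` to `G`. -/
def Reduction (F G : Frame) (f : F.World → G.World) : Prop :=
  Function.Surjective f ∧
  (∀ w u, F.rel w u → G.rel (f w) (f u)) ∧
  (∀ w v, G.rel (f w) v → ∃ u, F.rel w u ∧ f u = v)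

/-- `F` is reducible to `G`. -/
def Reducible (F G : Frame) : Prop := ∃ f, Reduction F G f

/-- The subframe of `F` generated by the point `w`. -/
def Frame.genSub (F : Frame) (w : F.World) : Frame :=
  ⟨{v // Relation.ReflTransGen F.rel w v}, fun a b => F.rel a.1 b.1⟩

/-- Modal formulas over countably many propositional variables. -/
inductive Formula where
  | var : ℕ → Formula
  | bot : Formula
  | imp : Formula → Formula → Formula
  | box : Formula → Formula
deriving DecidableEq

namespace Formula

def neg (a : Formula) : Formula := .imp a .bot
def top : Formula := .imp .bot .bot
def and (a b : Formula) : Formula := neg (.imp a (neg b))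
def or (a b : Formula) : Formula := .imp (neg a) b
def dia (a : Formula) : Formula := neg (.box (neg a))

/-- Finite conjunction of a list of formulas. -/
def bigConj (l : List Formula) : Formula := l.foldr and top

/-- Finite disjunction of a list of formulas. -/
def bigDisj (l : List Formula) : Formula := l.foldr or .bot

end Formula

/-- Kripke satisfaction of a formula at a world of `F` under valuation `V`. -/
def Sat (F : Frame) (V : ℕ → F.World → Prop) : F.World → Formula → Prop
  | w, .var n => V n w
  | _, .bot => False
  | w, .imp a b => Sat F V w a → Sat F V w b
  | w, .box a => ∀ u, F.rel w u → Sat F V u a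

/-- `φ` is valid at the point `w` of `F` (true under all valuations). -/
def SatAll (F : Frame) (w : F.World) (φ : Formula) : Prop := ∀ V, Sat F V w φ

/-- `φ` is valid in the frame `F`. -/
def Valid (F : Frame) (φ : Formula) : Prop := ∀ V w, Sat F V w φ

/-- The weak width formula `Wid_n^+`, with `q` encoded as variable `0` and
`p_i` as variable `i+1`:
`q ∧ ◇(□¬q ∧ ⋀_{i≤n} ◇p_i) → ⋁_{0 ≤ i ≠ j ≤ n} ◇(p_i ∧ (p_j ∨ ◇p_j))`. -/
def widPlus (n : ℕ) : Formula :=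
  .imp
    (.and (.var 0)
      (Formula.dia (.and (.box (Formula.neg (.var 0)))
        (Formula.bigConj ((List.finRange (n + 1)).map fun i => Formula.dia (.var (i + 1)))))))
    (Formula.bigDisj ((List.finRange (n + 1)).flatMap fun i =>
      (List.finRange (n + 1)).flatMap fun j =>
        if i = j then []
        else [Formula.dia (.and (.var (i + 1))
          (.or (.var (j + 1)) (Formula.dia (.var (j + 1)))))]))

/-- `A` is an antichain w.r.t. `R`: distinct elements are `R`-incomparable. -/
def AntichainIn {W : Type*} (R : W → W → Prop) (A : Set W) : Prop :=
  ∀ u ∈ A, ∀ v ∈ A, u ≠ v → ¬ R u v ∧ ¬ R v u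

/-!
Take the valuation making `q` true exactly at `w`; then `□¬q` holds at a successor `u` of `w` iff
`u` does not see `w`. Making each `p_i` true exactly at the `i`-th point of an antichain of `n + 1`
successors of `u` falsifies `Wid_n^+`. Conversely, under any valuation satisfying the antecedent the
witnesses of the `◇p_i` are `n + 1` successors of `u`, so if the width bound holds two of them
coincide or are related, which is what the consequent asserts (transitivity makes them visible from
`w`). For `n ≥ 1` an antichain of size `n + 1` in the subframe generated by `u` cannot contain `u`,
so only the successors of `u` matter.
-/

namespace Formula

variable {F : Frame} {V : ℕ → F.World → Prop} {w : F.World}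

@[simp]
lemma sat_and {a b : Formula} : Sat F V w (a.and b) ↔ Sat F V w a ∧ Sat F V w b := by
  simp only [Formula.and, neg, Sat]
  tauto

@[simp]
lemma sat_or {a b : Formula} : Sat F V w (a.or b) ↔ Sat F V w a ∨ Sat F V w b := by
  simp only [Formula.or, neg, Sat]
  tauto

@[simp]
lemma sat_neg {a : Formula} : Sat F V w a.neg ↔ ¬ Sat F V w a := Iff.rfl

@[simp]
lemma sat_dia {a : Formula} : Sat F V w a.dia ↔ ∃ u, F.rel w u ∧ Sat F V u a := by
  simp [dia, neg, Sat]

@[simp]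
lemma sat_bigConj {l : List Formula} : Sat F V w (bigConj l) ↔ ∀ φ ∈ l, Sat F V w φ := by
  induction l with
  | nil => simp [bigConj, top, Sat]
  | cons a l ih => simp_all [bigConj]

@[simp]
lemma sat_bigDisj {l : List Formula} : Sat F V w (bigDisj l) ↔ ∃ φ ∈ l, Sat F V w φ := by
  induction l with
  | nil => simp [bigDisj, Sat]
  | cons a l ih => simp_all [bigDisj]

end Formula

lemma sat_widPlus_iff {n : ℕ} {F : Frame} {V : ℕ → F.World → Prop} {w : F.World} :
    Sat F V w (widPlus n) ↔
      (V 0 w → ∀ u, F.rel w u → (∀ x, F.rel u x → ¬ V 0 x) →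
        (∀ i : Fin (n + 1), ∃ x, F.rel u x ∧ V (i + 1) x) →
        ∃ i j : Fin (n + 1), i ≠ j ∧ ∃ x, F.rel w x ∧ V (i + 1) x ∧
          (V (j + 1) x ∨ ∃ y, F.rel x y ∧ V (j + 1) y)) := by
  simp [widPlus, Sat, List.mem_flatMap, Fin.val_inj]

def markValuation {W : Type*} {m : ℕ} (w : W) (v : Fin m → W) : ℕ → W → Prop
  | 0, x => x = w
  | k + 1, x => ∃ h : k < m, x = v ⟨k, h⟩

@[simp]
lemma markValuation_zero {W : Type*} {m : ℕ} {w x : W} {v : Fin m → W} :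
    markValuation w v 0 x ↔ x = w := Iff.rfl

@[simp]
lemma markValuation_succ {W : Type*} {m : ℕ} {w x : W} {v : Fin m → W} (i : Fin m) :
    markValuation w v (i + 1) x ↔ x = v i := by
  simp [markValuation, i.isLt]

lemma satAll_widPlus_iff {n : ℕ} {F : Frame} (htr : ∀ a b c, F.rel a b → F.rel b c → F.rel a c)
    {w : F.World} :
    SatAll F w (widPlus n) ↔
      ∀ u, F.rel w u → ¬ F.rel u w → ∀ v : Fin (n + 1) → F.World, (∀ i, F.rel u (v i)) →
        ∃ i j, i ≠ j ∧ (v i = v j ∨ F.rel (v i) (v j)) := by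
  simp only [SatAll, sat_widPlus_iff]
  constructor
  · intro h u hwu huw v huv
    obtain ⟨i, j, hij, x, -, hi, hj⟩ := h (markValuation w v) rfl u hwu
      (fun x hux hxw => huw (hxw ▸ hux)) fun i => ⟨v i, huv i, by simp⟩
    rw [markValuation_succ] at hi
    subst hi
    exact ⟨i, j, hij, by simpa using hj⟩
  · intro h V hq u hwu hnq hp
    choose v huv hvp using hp
    obtain ⟨i, j, hij, hv⟩ := h u hwu (fun huw => hnq w huw hq) v huv
    refine ⟨i, j, hij, v i, htr _ _ _ hwu (huv i), hvp i, ?_⟩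
    rcases hv with heq | hrel
    · exact .inl (heq ▸ hvp j)
    · exact .inr ⟨v j, hrel, hvp j⟩

section Antichain

variable {W : Type*} {R : W → W → Prop} {u : W}

lemma AntichainIn.rel_of_subset_cone {A : Set W} (hA : AntichainIn R A)
    (hsub : A ⊆ {v | v = u ∨ R u v}) {x y : W} (hx : x ∈ A) (hy : y ∈ A) (hxy : x ≠ y) :
    R u x := by
  rcases hsub hx with rfl | hux
  · rcases hsub hy with rfl | hxy'
    · exact absurd rfl hxy
    · exact absurd hxy' (hA x hx y hy hxy).1
  · exact hux

lemma antichainIn_cone_card_le_iff {n : ℕ} (hn : 1 ≤ n) :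
    (∀ A : Set W, A ⊆ {v | v = u ∨ R u v} → AntichainIn R A → Cardinal.mk A ≤ (n : Cardinal)) ↔
      ∀ v : Fin (n + 1) → W, (∀ i, R u (v i)) → ∃ i j, i ≠ j ∧ (v i = v j ∨ R (v i) (v j)) := by
  constructor
  · intro h v huv
    by_contra! hv
    have hinj : Function.Injective v := fun i j hij => by
      by_contra hne
      exact (hv i j hne).1 hij
    have hanti : AntichainIn R (Set.range v) := by
      rintro _ ⟨i, rfl⟩ _ ⟨j, rfl⟩ hne
      exact ⟨(hv i j (ne_of_apply_ne v hne)).2, (hv j i (ne_of_apply_ne v hne.symm)).2⟩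
    have hcard := h (Set.range v) (by rintro _ ⟨i, rfl⟩; exact .inr (huv i)) hanti
    have hrange := Cardinal.mk_range_eq_of_injective hinj
    rw [Cardinal.mk_fin, Cardinal.lift_natCast, Cardinal.lift_eq_nat_iff] at hrange
    rw [hrange, Nat.cast_le] at hcard
    omega
  · intro h A hsub hA
    by_contra! hcard
    obtain ⟨f⟩ : Nonempty (Fin (n + 1) ↪ A) := by
      rw [← Cardinal.lift_mk_le', Cardinal.mk_fin, Cardinal.lift_natCast, Cardinal.lift_uzero,
        Nat.cast_succ, ← Cardinal.succ_natCast]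
      exact Order.succ_le_of_lt hcard
    have hf : ∀ {i j}, i ≠ j → (f i : W) ≠ f j := fun hij h => hij (f.injective (Subtype.ext h))
    have : Nontrivial (Fin (n + 1)) := Fin.nontrivial_iff_two_le.2 (by omega)
    have huf : ∀ i, R u (f i) := fun i =>
      have ⟨j, hj⟩ := exists_ne i
      hA.rel_of_subset_cone hsub (f i).2 (f j).2 (hf hj.symm)
    obtain ⟨i, j, hij, heq | hrel⟩ := h (fun i => f i) huf
    · exact hf hij heq
    · exact (hA _ (f i).2 _ (f j).2 (hf hij)).1 hrel

end Antichain

/-- Frame condition for `Wid_n^+`: it is valid at `w` iff for every proper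
successor `u` of `w`, every antichain contained in the subframe generated by
`u` has at most `n` elements. -/
theorem widPlus_frame_condition (n : ℕ) (hn : 1 ≤ n) (F : Frame)
    (htr : ∀ a b c, F.rel a b → F.rel b c → F.rel a c) (w : F.World) :
    SatAll F w (widPlus n) ↔
      ∀ u : F.World, F.rel w u → ¬ F.rel u w →
        ∀ A : Set F.World, A ⊆ {v | v = u ∨ F.rel u v} → AntichainIn F.rel A →
          Cardinal.mk A ≤ (n : Cardinal) := by
  simp only [satAll_widPlus_iff htr, antichainIn_cone_card_le_iff hn]
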